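/- Let F be a field and let (a,b) be a non-vanishing solution to the discrete 2D Toda molecule over F. Suppose f, f̃ : ℤ × ℤ → F both have all determinants τ^{(s,t)}_n = det_{0 ≤ i,j < n}(f_{s+i,t+j}) (respectively with f̃) nonzero and both give the same solution (a,b) through the dependent variable transformation. Then there exists a function φ : ℤ → F with φ_j ≠ 0 for all j such that f̃_{i,j} = φ_j · f_{i,j} for all (i,j) ∈ ℤ². Conversely, if f gives the solution (a,b) and φ : ℤ → F is non-vanishing, then f̃_{i,j} := φ_j f_{i,j} also has all determinants nonzero and gives the same solution (a,b). -/

import Mathlib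

/-- A solution to the discrete 2D Toda molecule. -/
def IsTodaSolution {F : Type*} [Field F] (a b : ℤ → ℤ → ℕ → F) : Prop :=
  (∀ (s t : ℤ) (n : ℕ), a s (t + 1) n + b (s + 1) t n = a s t n + b s t (n + 1)) ∧
  (∀ (s t : ℤ) (n : ℕ), a s (t + 1) n * b (s + 1) t (n + 1) = a s t (n + 1) * b s t (n + 1)) ∧
  (∀ s t : ℤ, b s t 0 = 0)

/-- The solution is non-vanishing: `a` nonzero for all `n ≥ 0`, `b` nonzero for all `n ≥ 1`. -/
def NonVanishing {F : Type*} [Field F] (a b : ℤ → ℤ → ℕ → F) : Prop :=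
  (∀ (s t : ℤ) (n : ℕ), a s t n ≠ 0) ∧ (∀ (s t : ℤ) (n : ℕ), b s t (n + 1) ≠ 0)

/-- `tau f s t n` is the `n × n` determinant `det_{0 ≤ i,j < n} (f (s+i, t+j))`. -/
noncomputable def tau {F : Type*} [Field F] (f : ℤ × ℤ → F) (s t : ℤ) (n : ℕ) : F :=
  Matrix.det (Matrix.of fun i j : Fin n => f (s + (i : ℕ), t + (j : ℕ)))

/-- `f` gives the solution `(a, b)` through the dependent variable transformation:
all determinants `τ` are nonzero, `a^{(s,t)}_n = τ^{(s+1,t)}_{n+1} τ^{(s,t)}_n /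
(τ^{(s+1,t)}_n τ^{(s,t)}_{n+1})` for `n ≥ 0`, and `b^{(s,t)}_n =
τ^{(s,t+1)}_{n-1} τ^{(s,t)}_{n+1} / (τ^{(s,t+1)}_n τ^{(s,t)}_n)` for `n ≥ 1`. -/
def GivesSol {F : Type*} [Field F] (f : ℤ × ℤ → F) (a b : ℤ → ℤ → ℕ → F) : Prop :=
  (∀ (s t : ℤ) (n : ℕ), tau f s t n ≠ 0) ∧
  (∀ (s t : ℤ) (n : ℕ),
    a s t n = tau f (s + 1) t (n + 1) * tau f s t n / (tau f (s + 1) t n * tau f s t (n + 1))) ∧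
  (∀ (s t : ℤ) (n : ℕ),
    b s t (n + 1) =
      tau f s (t + 1) n * tau f s t (n + 2) / (tau f s (t + 1) (n + 1) * tau f s t (n + 1)))

lemma tau_scale {F : Type*} [Field F] (f : ℤ × ℤ → F) (φ : ℤ → F) (s t : ℤ) (n : ℕ) :
    tau (fun p => φ p.2 * f p) s t n = (∏ j : Fin n, φ (t + (j : ℕ))) * tau f s t n := by
  unfold tau
  rw [← Matrix.det_mul_row]
  rfl

lemma tau_one {F : Type*} [Field F] (f : ℤ × ℤ → F) (s t : ℤ) : tau f s t 1 = f (s, t) := by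
  unfold tau
  rw [Matrix.det_fin_one]
  simp

lemma tau_zero {F : Type*} [Field F] (f : ℤ × ℤ → F) (s t : ℤ) : tau f s t 0 = 1 := by
  unfold tau
  exact Matrix.det_fin_zero

lemma prod_shift {F : Type*} [Field F] (φ : ℤ → F) (t : ℤ) (n : ℕ) :
    (∏ j : Fin (n + 1), φ (t + (j : ℕ))) = φ t * ∏ j : Fin n, φ (t + 1 + (j : ℕ)) := by
  rw [Fin.prod_univ_succ]
  simp only [Fin.val_succ, Fin.val_zero, Nat.cast_zero, add_zero]
  congr 1
  apply Finset.prod_congr rfl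
  intro j _
  congr 1
  push_cast
  ring

/-- The function `f` giving a fixed non-vanishing Toda solution `(a, b)` is
unique up to the transformation `f_{i,j} ↦ φ_j · f_{i,j}` by a non-vanishing `φ : ℤ → F`;
conversely any such transformation of a function giving `(a, b)` again gives `(a, b)`. -/
theorem givesSol_unique_up_to_column_scaling {F : Type*} [Field F] (a b : ℤ → ℤ → ℕ → F)
    (hT : IsTodaSolution a b) (hnv : NonVanishing a b) :
    (∀ f ftilde : ℤ × ℤ → F, GivesSol f a b → GivesSol ftilde a b →
      ∃ φ : ℤ → F, (∀ j : ℤ, φ j ≠ 0) ∧ ∀ i j : ℤ, ftilde (i, j) = φ j * f (i, j)) ∧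
    (∀ f : ℤ × ℤ → F, GivesSol f a b → ∀ φ : ℤ → F, (∀ j : ℤ, φ j ≠ 0) →
      GivesSol (fun p => φ p.2 * f p) a b) := by
  constructor
  · intro f ft hf hft
    obtain ⟨hfτ, hfa, _⟩ := hf
    obtain ⟨hftτ, hfta, _⟩ := hft
    have hf1 : ∀ s t : ℤ, f (s, t) ≠ 0 := fun s t => tau_one f s t ▸ hfτ s t 1
    have hft1 : ∀ s t : ℤ, ft (s, t) ≠ 0 := fun s t => tau_one ft s t ▸ hftτ s t 1
    have key : ∀ s t : ℤ, ft (s + 1, t) * f (s, t) = f (s + 1, t) * ft (s, t) := by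
      intro s t
      have h1 := hfa s t 0
      have h2 := hfta s t 0
      rw [tau_one, tau_one, tau_zero, tau_zero, one_mul, mul_one] at h1
      rw [tau_one, tau_one, tau_zero, tau_zero, one_mul, mul_one] at h2
      rw [h1] at h2
      exact ((div_eq_div_iff (hf1 s t) (hft1 s t)).mp h2).symm
    refine ⟨fun j => ft (0, j) / f (0, j),
      fun j => div_ne_zero (hft1 0 j) (hf1 0 j), ?_⟩
    intro i j
    induction i using Int.induction_on with
    | zero => rw [div_mul_cancel₀ _ (hf1 0 j)]
    | succ s ih =>
        have h := key s j
        rw [ih] at h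
        have := mul_right_cancel₀ (hf1 s j) (by linear_combination h :
          ft (s + 1, j) * f (s, j) = (ft (0, j) / f (0, j) * f (s + 1, j)) * f (s, j))
        exact this
    | pred s ih =>
        have h := key (-s - 1) j
        have he : (-s - 1 : ℤ) + 1 = -s := by ring
        rw [he, ih] at h
        have := mul_left_cancel₀ (hf1 (-s) j) (by linear_combination -h :
          f (-s, j) * ft (-s - 1, j) = f (-s, j) * (ft (0, j) / f (0, j) * f (-s - 1, j)))
        exact this
  · intro f hf φ hφ
    obtain ⟨hτ, ha, hb⟩ := hf
    have hc : ∀ (t : ℤ) (n : ℕ), (∏ j : Fin n, φ (t + (j : ℕ))) ≠ 0 := fun t n =>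
      Finset.prod_ne_zero_iff.mpr fun j _ => hφ _
    refine ⟨fun s t n => by rw [tau_scale]; exact mul_ne_zero (hc t n) (hτ s t n), ?_, ?_⟩
    · intro s t n
      rw [tau_scale, tau_scale, tau_scale, tau_scale, ha s t n]
      rw [div_eq_div_iff (mul_ne_zero (hτ (s + 1) t n) (hτ s t (n + 1)))
        (mul_ne_zero (mul_ne_zero (hc t n) (hτ (s + 1) t n))
          (mul_ne_zero (hc t (n + 1)) (hτ s t (n + 1))))]
      ring
    · intro s t n
      rw [tau_scale, tau_scale, tau_scale, tau_scale, hb s t n]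
      rw [div_eq_div_iff (mul_ne_zero (hτ s (t + 1) (n + 1)) (hτ s t (n + 1)))
        (mul_ne_zero (mul_ne_zero (hc (t + 1) (n + 1)) (hτ s (t + 1) (n + 1)))
          (mul_ne_zero (hc t (n + 1)) (hτ s t (n + 1))))]
      have h1 : (∏ j : Fin (n + 2), φ (t + (j : ℕ)))
          = φ t * ∏ j : Fin (n + 1), φ (t + 1 + (j : ℕ)) := prod_shift φ t (n + 1)
      have h2 : (∏ j : Fin (n + 1), φ (t + (j : ℕ)))
          = φ t * ∏ j : Fin n, φ (t + 1 + (j : ℕ)) := prod_shift φ t n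
      rw [h1, h2]
      ring
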